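/- arXiv:2209.14273 — 4 statements merged into one kernel-verified Lean document; each statement's English description precedes it below -/
import Mathlib

section
/- Let V be a finite-dimensional real vector space and let Φ ∪ Ψ be a (possibly infinite, locally finite) family of affine functions defining a hyperplane arrangement on V with chamber set Ch. For chambers C, C', let Φ⁺_C denote the set of functions positive on C, etc. Then for chambers C, C', C'' one has d(C, C'') = d(C, C') + d(C', C'') if and only if Φ⁺_C ∩ Φ⁺_{C''} ⊆ Φ⁺_{C'} ⊆ Φ⁺_C ∪ Φ⁺_{C''} and similarly for Ψ, where d counts the number of walls separating two chambers. -/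
/-! **Statement 3.** Combinatorics of chambers of an affine hyperplane arrangement:
`d(C, C'') = d(C, C') + d(C', C'')` iff
`Φ⁺_C ∩ Φ⁺_{C''} ⊆ Φ⁺_{C'} ⊆ Φ⁺_C ∪ Φ⁺_{C''}` and similarly for `Ψ`. -/

namespace Stmt3

variable {V : Type*} [NormedAddCommGroup V] [NormedSpace ℝ V]

/-- The affine function `φ` is (strictly) positive on the set `C`. -/
def Pos (C : Set V) (φ : V →ᵃ[ℝ] ℝ) : Prop := ∀ x ∈ C, 0 < φ x

/-- The affine function `φ` is (strictly) negative on the set `C`. -/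
def Neg (C : Set V) (φ : V →ᵃ[ℝ] ℝ) : Prop := ∀ x ∈ C, φ x < 0

/-- The set of walls from the family `Θ` separating `C` from `C'`. -/
def Sep (Θ : Set (V →ᵃ[ℝ] ℝ)) (C C' : Set V) : Set (V →ᵃ[ℝ] ℝ) :=
  {φ ∈ Θ | (Pos C φ ∧ Neg C' φ) ∨ (Neg C φ ∧ Pos C' φ)}

/-- The set `Θ⁺_C` of functions from `Θ` which are positive on `C`. -/
def PosSet (Θ : Set (V →ᵃ[ℝ] ℝ)) (C : Set V) : Set (V →ᵃ[ℝ] ℝ) :=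
  {φ ∈ Θ | Pos C φ}

/-- `C` is a chamber of the arrangement defined by the family `Θ` of affine functions:
a connected component of the complement of the union of their zero loci. -/
def IsChamber (Θ : Set (V →ᵃ[ℝ] ℝ)) (C : Set V) : Prop :=
  ∃ x ∈ {y : V | ∀ φ ∈ Θ, φ y ≠ 0}, C = connectedComponentIn {y : V | ∀ φ ∈ Θ, φ y ≠ 0} x

/-!
A wall of the arrangement cannot vanish on a chamber, so by the intermediate value theorem on the
connected chamber it has constant sign there. Hence the walls separating two chambers form the
symmetric difference of their sets of positive functions, and therefore
`Sep(C, C'') = Sep(C, C') ∆ Sep(C', C'')`. The cardinality of a symmetric difference is the sum of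
the cardinalities exactly when the two sets are disjoint, i.e. when no wall separates `C'` from both
`C` and `C''`; unwinding this in terms of positive sets gives the betweenness condition.
-/

open scoped symmDiff

theorem ncard_symmDiff_eq_add_iff {α : Type*} {A B : Set α} (hA : A.Finite) (hB : B.Finite) :
    (A ∆ B).ncard = A.ncard + B.ncard ↔ Disjoint A B := by
  have hinter : (A ∩ B).Finite := hA.inter_of_left B
  have hsub : A ∩ B ⊆ A ∪ B := Set.inter_subset_left.trans Set.subset_union_left
  have hunion := Set.ncard_union_add_ncard_inter A B hA hB
  have hle : (A ∩ B).ncard ≤ (A ∪ B).ncard := Set.ncard_le_ncard hsub (hA.union hB)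
  have hsymm : A ∆ B = (A ∪ B) \ (A ∩ B) := symmDiff_eq_sup_sdiff_inf A B
  rw [hsymm, Set.ncard_sdiff hsub hinter, Set.disjoint_iff_inter_eq_empty,
    ← Set.ncard_eq_zero hinter]
  omega

theorem disjoint_symmDiff_symmDiff_iff {α : Type*} {a b c : Set α} :
    Disjoint (a ∆ b) (b ∆ c) ↔ a ∩ c ⊆ b ∧ b ⊆ a ∪ c := by
  simp only [Set.disjoint_left, Set.subset_def, Set.mem_symmDiff, Set.mem_inter_iff,
    Set.mem_union, ← forall_and]
  exact forall_congr' fun x => by tauto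

section Chamber

variable {Θ : Set (V →ᵃ[ℝ] ℝ)} {C : Set V}

theorem IsChamber.nonempty (h : IsChamber Θ C) : C.Nonempty := by
  obtain ⟨x, hx, rfl⟩ := h
  exact ⟨x, mem_connectedComponentIn hx⟩

theorem IsChamber.pos_or_neg [FiniteDimensional ℝ V] (h : IsChamber Θ C) {φ : V →ᵃ[ℝ] ℝ}
    (hφ : φ ∈ Θ) : Pos C φ ∨ Neg C φ := by
  obtain ⟨x, hx, rfl⟩ := h
  by_contra! hsign
  simp only [Pos, Neg, not_forall, not_lt, exists_prop] at hsign
  obtain ⟨⟨a, ha, hφa⟩, ⟨b, hb, hφb⟩⟩ := hsign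
  obtain ⟨c, hc, hφc⟩ := isPreconnected_connectedComponentIn.intermediate_value ha hb
    φ.continuous_of_finiteDimensional.continuousOn ⟨hφa, hφb⟩
  exact connectedComponentIn_subset _ x hc φ hφ hφc

theorem IsChamber.neg_iff_not_pos [FiniteDimensional ℝ V] (h : IsChamber Θ C)
    {φ : V →ᵃ[ℝ] ℝ} (hφ : φ ∈ Θ) : Neg C φ ↔ ¬ Pos C φ := by
  obtain ⟨y, hy⟩ := h.nonempty
  exact ⟨fun hneg hpos => (hneg y hy).not_gt (hpos y hy), (h.pos_or_neg hφ).resolve_left⟩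

end Chamber

theorem sep_eq_symmDiff [FiniteDimensional ℝ V] {Θ Θ' : Set (V →ᵃ[ℝ] ℝ)} {X Y : Set V}
    (hΘ : Θ ⊆ Θ') (hX : IsChamber Θ' X) (hY : IsChamber Θ' Y) :
    Sep Θ X Y = PosSet Θ X ∆ PosSet Θ Y := by
  ext φ
  simp only [Sep, PosSet, Set.mem_symmDiff, Set.mem_ofPred_eq]
  by_cases hφ : φ ∈ Θ
  · rw [hX.neg_iff_not_pos (hΘ hφ), hY.neg_iff_not_pos (hΘ hφ)]
    tauto
  · simp [hφ]

theorem disjoint_sep_union_iff {Φ Ψ : Set (V →ᵃ[ℝ] ℝ)} {X Y Z : Set V} :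
    Disjoint (Sep (Φ ∪ Ψ) X Y) (Sep (Φ ∪ Ψ) Y Z) ↔
      Disjoint (Sep Φ X Y) (Sep Φ Y Z) ∧ Disjoint (Sep Ψ X Y) (Sep Ψ Y Z) := by
  simp only [Set.disjoint_left, Sep, Set.mem_ofPred_eq, Set.mem_union, ← forall_and]
  exact forall_congr' fun φ => by tauto

theorem dist_add_iff_between_general
    [FiniteDimensional ℝ V]
    (Φ Ψ : Set (V →ᵃ[ℝ] ℝ)) (C C' C'' : Set V)
    (hC : IsChamber (Φ ∪ Ψ) C) (hC' : IsChamber (Φ ∪ Ψ) C') (hC'' : IsChamber (Φ ∪ Ψ) C'')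
    (h1 : (Sep (Φ ∪ Ψ) C C').Finite) (h2 : (Sep (Φ ∪ Ψ) C' C'').Finite) :
    (Sep (Φ ∪ Ψ) C C'').ncard = (Sep (Φ ∪ Ψ) C C').ncard + (Sep (Φ ∪ Ψ) C' C'').ncard ↔
      ((PosSet Φ C ∩ PosSet Φ C'' ⊆ PosSet Φ C' ∧ PosSet Φ C' ⊆ PosSet Φ C ∪ PosSet Φ C'') ∧
       (PosSet Ψ C ∩ PosSet Ψ C'' ⊆ PosSet Ψ C' ∧ PosSet Ψ C' ⊆ PosSet Ψ C ∪ PosSet Ψ C'')) := by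
  have hΦ : Φ ⊆ Φ ∪ Ψ := Set.subset_union_left
  have hΨ : Ψ ⊆ Φ ∪ Ψ := Set.subset_union_right
  have htriangle : Sep (Φ ∪ Ψ) C C'' = Sep (Φ ∪ Ψ) C C' ∆ Sep (Φ ∪ Ψ) C' C'' := by
    rw [sep_eq_symmDiff subset_rfl hC hC'', sep_eq_symmDiff subset_rfl hC hC',
      sep_eq_symmDiff subset_rfl hC' hC'', symmDiff_assoc, symmDiff_symmDiff_cancel_left]
  rw [htriangle, ncard_symmDiff_eq_add_iff h1 h2, disjoint_sep_union_iff,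
    sep_eq_symmDiff hΦ hC hC', sep_eq_symmDiff hΦ hC' hC'', sep_eq_symmDiff hΨ hC hC',
    sep_eq_symmDiff hΨ hC' hC'', disjoint_symmDiff_symmDiff_iff, disjoint_symmDiff_symmDiff_iff]

/-- Let `Φ ∪ Ψ` be a (locally finite) family of affine functions on a
finite-dimensional real vector space `V`, defining a hyperplane arrangement, and let
`C, C', C''` be chambers.  (Local finiteness is used through the hypothesis that the sets of
separating walls between the chambers under consideration are finite.)  Letting
`d(D, D')` denote the number of walls separating `D` and `D'`, one has
`d(C, C'') = d(C, C') + d(C', C'')` if and only if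
`Φ⁺_C ∩ Φ⁺_{C''} ⊆ Φ⁺_{C'} ⊆ Φ⁺_C ∪ Φ⁺_{C''}` and similarly for `Ψ`. -/
theorem dist_add_iff_between
    [FiniteDimensional ℝ V]
    (Φ Ψ : Set (V →ᵃ[ℝ] ℝ)) (C C' C'' : Set V)
    (hC : IsChamber (Φ ∪ Ψ) C) (hC' : IsChamber (Φ ∪ Ψ) C') (hC'' : IsChamber (Φ ∪ Ψ) C'')
    (h1 : (Sep (Φ ∪ Ψ) C C').Finite) (h2 : (Sep (Φ ∪ Ψ) C' C'').Finite)
    (h3 : (Sep (Φ ∪ Ψ) C C'').Finite) :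
    (Sep (Φ ∪ Ψ) C C'').ncard = (Sep (Φ ∪ Ψ) C C').ncard + (Sep (Φ ∪ Ψ) C' C'').ncard ↔
      ((PosSet Φ C ∩ PosSet Φ C'' ⊆ PosSet Φ C' ∧ PosSet Φ C' ⊆ PosSet Φ C ∪ PosSet Φ C'') ∧
       (PosSet Ψ C ∩ PosSet Ψ C'' ⊆ PosSet Ψ C' ∧ PosSet Ψ C' ⊆ PosSet Ψ C ∪ PosSet Ψ C'')) :=
  dist_add_iff_between_general Φ Ψ C C' C'' hC hC' hC'' h1 h2

end Stmt3
end

section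
/- Let V be a finite-dimensional euclidean affine space, L ⊂ V a lattice acting by translations with compact quotient Q. Let p₀, p₁ ∈ V and ε > 0 be such that the open balls B_ε(p₀) and B_ε(p₁) are disjoint from a given L-invariant locally finite hyperplane arrangement's walls (i.e. contained in open chambers C₀, C₁). If ‖p₁ − p₀‖/ε ≥ Vol(Q)/Vol(B_{ε/2}(p₀)) + 1, then there exists a nonzero lattice vector v ∈ L and a point p₂ ∈ (C₀ + v) ∩ [p₀, p₁]. -/
/-!
Place `m + 1 > Vol(Q) / Vol(B_{ε/2})` points on `[p₀, p₁]` at mutual distances at least `ε`,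
starting at `p₀`. The balls of radius `ε/2` around them are disjoint, so their union has volume
larger than the covolume of `L`, and by Blichfeldt's principle it contains two distinct points
`a ∈ B_{ε/2}(c_i)`, `b ∈ B_{ε/2}(c_j)` with `v = a - b ∈ L`. Then `c_{i-j}` lies on the segment
and `c_{i-j} - v` is within `ε` of `p₀`, hence in `C₀`.
-/

open MeasureTheory Metric Finset AffineMap

theorem AffineMap.lineMap_sub_sub_left {𝕜 V : Type*} [Ring 𝕜] [AddCommGroup V] [Module 𝕜 V]
    (p₀ p₁ : V) (a b : 𝕜) :
    lineMap p₀ p₁ (a - b) - p₀ = lineMap p₀ p₁ a - lineMap p₀ p₁ b := by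
  simp only [lineMap_apply_module', sub_smul]
  abel

theorem dist_lineMap_div_dist {E : Type*} [NormedAddCommGroup E] [NormedSpace ℝ E] {p₀ p₁ : E}
    (h : p₀ ≠ p₁) (a b : ℝ) :
    dist (lineMap p₀ p₁ (a / dist p₀ p₁)) (lineMap p₀ p₁ (b / dist p₀ p₁)) = |a - b| := by
  rw [dist_lineMap_lineMap, Real.dist_eq, ← sub_div, abs_div, abs_dist,
    div_mul_cancel₀ _ (dist_ne_zero.mpr h)]

namespace ZLattice

variable {E : Type*} [NormedAddCommGroup E] [NormedSpace ℝ E] [FiniteDimensional ℝ E]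
  [MeasurableSpace E] [BorelSpace E] (μ : Measure E) [μ.IsAddHaarMeasure]
  {L : Submodule ℤ E} [DiscreteTopology L] [IsZLattice ℝ L]

theorem exists_ne_sub_mem_of_covolume_lt {s : Set E} (hs : NullMeasurableSet s μ)
    (h : ENNReal.ofReal (covolume L μ) < μ s) :
    ∃ a ∈ s, ∃ b ∈ s, a ≠ b ∧ a - b ∈ L := by
  have : MeasurableVAdd L E := (inferInstance : MeasurableVAdd L.toAddSubgroup E)
  have : VAddInvariantMeasure L E μ :=
    (inferInstance : VAddInvariantMeasure L.toAddSubgroup E μ)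
  have fund := isAddFundamentalDomain (Module.Free.chooseBasis ℤ L) μ
  rw [covolume_eq_measure_fundamentalDomain L μ fund,
    ofReal_measureReal (ZSpan.fundamentalDomain_isBounded _).measure_lt_top.ne] at h
  obtain ⟨x, y, hxy, hxys⟩ := exists_pair_mem_lattice_not_disjoint_vadd fund hs h
  obtain ⟨_, ⟨a, ha, rfl⟩, ⟨b, hb, hab⟩⟩ := Set.not_disjoint_iff.mp hxys
  have hdiff : a - b = (y : E) - x := by
    have hab : (y : E) + b = x + a := hab
    rw [sub_eq_sub_iff_add_eq_add, add_comm a, hab]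
  refine ⟨a, ha, b, hb, fun hab' => hxy (Subtype.ext (sub_eq_zero.mp ?_).symm),
    hdiff ▸ sub_mem y.2 x.2⟩
  rw [← hdiff, hab', sub_self]

theorem exists_dist_sub_lt_of_covolume_lt {ι : Type*} [LinearOrder ι] {t : Finset ι}
    {x : ι → E} {r : ℝ} (hx : (t : Set ι).PairwiseDisjoint fun i => ball (x i) r)
    (h : covolume L μ < #t * μ.real (ball 0 r)) :
    ∃ i ∈ t, ∃ j ∈ t, j ≤ i ∧ ∃ v ∈ L, v ≠ 0 ∧ dist (x i - x j) v < 2 * r := by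
  set s := ⋃ i ∈ t, ball (x i) r
  have hμs : μ s = #t * μ (ball 0 r) := by
    rw [measure_biUnion_finset hx fun _ _ => measurableSet_ball]
    simp only [Measure.addHaar_ball_center μ, sum_const, nsmul_eq_mul]
  have hs : ENNReal.ofReal (covolume L μ) < μ s := by
    rwa [ENNReal.ofReal_lt_iff_lt_toReal (covolume_pos L μ).le
      (hμs ▸ ENNReal.mul_ne_top (ENNReal.natCast_ne_top _) measure_ball_lt_top.ne),
      hμs, ENNReal.toReal_mul, ENNReal.toReal_natCast]
  obtain ⟨a, ha, b, hb, hab, habL⟩ :=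
    exists_ne_sub_mem_of_covolume_lt μ (t.measurableSet_biUnion fun _ _ =>
      measurableSet_ball).nullMeasurableSet hs
  simp only [Set.mem_iUnion, mem_ball, exists_prop] at ha hb
  obtain ⟨i, hi, hai⟩ := ha
  obtain ⟨j, hj, hbj⟩ := hb
  have hdist : dist (x i - x j) (a - b) < 2 * r := by
    calc dist (x i - x j) (a - b) ≤ dist (x i) a + dist (x j) b := dist_sub_sub_le _ _ _ _
      _ < 2 * r := by rw [dist_comm (x i), dist_comm (x j)]; linarith
  rcases le_total j i with hji | hij
  · exact ⟨i, hi, j, hj, hji, a - b, habL, sub_ne_zero.mpr hab, hdist⟩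
  · refine ⟨j, hj, i, hi, hij, -(a - b), neg_mem habL, neg_ne_zero.mpr (sub_ne_zero.mpr hab), ?_⟩
    rwa [← neg_sub (x i), dist_neg_neg]

theorem exists_ne_zero_mem_segment_sub_mem_ball {p₀ p₁ : E} {ε : ℝ} (hε : 0 < ε)
    (h : covolume L μ / μ.real (ball 0 (ε / 2)) + 1 ≤ dist p₀ p₁ / ε) :
    ∃ v ∈ L, v ≠ 0 ∧ ∃ p ∈ segment ℝ p₀ p₁, p - v ∈ ball p₀ ε := by
  set D := dist p₀ p₁
  set V := μ.real (ball 0 (ε / 2))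
  have hV : 0 < V :=
    ENNReal.toReal_pos (measure_ball_pos _ _ (half_pos hε)).ne' measure_ball_lt_top.ne
  have hq : 0 ≤ covolume L μ / V := div_nonneg (covolume_pos L μ).le hV.le
  set q := covolume L μ / V
  set m := ⌊D / ε⌋₊
  have hqm : q < m := by linarith [Nat.lt_floor_add_one (D / ε)]
  have hD : 0 < D := hε.trans_le <| (one_le_div hε).mp (by linarith)
  let c : ℕ → E := fun k => lineMap p₀ p₁ (k * ε / D)
  have hc : ((range (m + 1) : Finset ℕ) : Set ℕ).PairwiseDisjoint fun k => ball (c k) (ε / 2) := by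
    intro i _ j _ hij
    refine ball_disjoint_ball ?_
    have h1 : (1 : ℝ) ≤ |(i : ℝ) - j| := by
      exact_mod_cast Int.one_le_abs (sub_ne_zero.mpr (Nat.cast_injective.ne hij))
    rw [dist_lineMap_div_dist (dist_pos.mp hD), ← sub_mul, abs_mul, abs_of_pos hε]
    linarith [le_mul_of_one_le_left hε.le h1]
  obtain ⟨i, hi, j, -, hji, v, hvL, hv, hdist⟩ := exists_dist_sub_lt_of_covolume_lt μ hc
    (by rw [card_range, Nat.cast_succ, ← div_lt_iff₀ hV]; exact hqm.trans (lt_add_one _))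
  have hc_sub : c (i - j) - p₀ = c i - c j := by
    change lineMap p₀ p₁ (((i - j : ℕ) : ℝ) * ε / D) - p₀ = _
    rw [Nat.cast_sub hji, sub_mul, sub_div, lineMap_sub_sub_left]
  refine ⟨v, hvL, hv, c (i - j), lineMap_mem_segment ℝ p₀ p₁ ⟨by positivity, ?_⟩, ?_⟩
  · rw [div_le_one hD, ← le_div_iff₀ hε]
    have him : i - j ≤ m := (i.sub_le j).trans (Nat.lt_succ_iff.mp (mem_range.mp hi))
    exact (Nat.cast_le.mpr him).trans (Nat.floor_le (div_nonneg hD.le hε.le))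
  · rw [mem_ball, dist_eq_norm, sub_right_comm, hc_sub, ← dist_eq_norm]
    linarith

end ZLattice

theorem exists_lattice_translate_chamber_meets_segment_general
    (n : ℕ) (L : Submodule ℤ (EuclideanSpace ℝ (Fin n)))
    [DiscreteTopology L] [IsZLattice ℝ L]
    (C₀ : Set (EuclideanSpace ℝ (Fin n)))
    (p₀ p₁ : EuclideanSpace ℝ (Fin n)) (ε : ℝ) (hε : 0 < ε)
    (hb₀ : Metric.ball p₀ ε ⊆ C₀)
    (hvol : ZLattice.covolume L volume / (volume (Metric.ball p₀ (ε / 2))).toReal + 1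
      ≤ ‖p₁ - p₀‖ / ε) :
    ∃ v ∈ L, v ≠ 0 ∧ ∃ p₂ ∈ segment ℝ p₀ p₁, p₂ ∈ (fun x => x + v) '' C₀ := by
  rw [← dist_eq_norm, dist_comm, Measure.addHaar_ball_center, ← measureReal_def] at hvol
  obtain ⟨v, hvL, hv, p, hp, hpv⟩ :=
    ZLattice.exists_ne_zero_mem_segment_sub_mem_ball volume hε hvol
  exact ⟨v, hvL, hv, p, hp, p - v, hb₀ hpv, sub_add_cancel p v⟩

/-- Let `V` be a finite-dimensional euclidean space (here modelled as
`EuclideanSpace ℝ (Fin n)`), `L ⊂ V` a full-rank lattice acting by translations with compact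
quotient `Q` (so that `Vol(Q)` is the covolume of `L`).  Let a locally finite, `L`-invariant
hyperplane arrangement be given by a family `Θ` of affine functions whose union of zero loci
is `W`.  Let `p₀, p₁ ∈ V` and `ε > 0` be such that the open balls `B_ε(p₀)` and `B_ε(p₁)` are
disjoint from the walls, being contained in open chambers `C₀`, `C₁`.  If
`‖p₁ − p₀‖ / ε ≥ Vol(Q) / Vol(B_{ε/2}(p₀)) + 1` then there exist a nonzero lattice vector
`v ∈ L` and a point `p₂ ∈ (C₀ + v) ∩ [p₀, p₁]`. -/
theorem exists_lattice_translate_chamber_meets_segment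
    (n : ℕ) (L : Submodule ℤ (EuclideanSpace ℝ (Fin n)))
    [DiscreteTopology L] [IsZLattice ℝ L]
    (Θ : Set (EuclideanSpace ℝ (Fin n) →ᵃ[ℝ] ℝ))
    (W : Set (EuclideanSpace ℝ (Fin n)))
    (hW : W = {x | ∃ φ ∈ Θ, φ x = 0})
    (hWinv : ∀ v ∈ L, (fun x => x + v) '' W = W)
    (C₀ C₁ : Set (EuclideanSpace ℝ (Fin n)))
    (p₀ p₁ : EuclideanSpace ℝ (Fin n)) (ε : ℝ) (hε : 0 < ε)
    (hC₀ : p₀ ∈ Wᶜ ∧ C₀ = connectedComponentIn Wᶜ p₀)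
    (hC₁ : p₁ ∈ Wᶜ ∧ C₁ = connectedComponentIn Wᶜ p₁)
    (hb₀ : Metric.ball p₀ ε ⊆ C₀) (hb₁ : Metric.ball p₁ ε ⊆ C₁)
    (hvol : ZLattice.covolume L volume / (volume (Metric.ball p₀ (ε / 2))).toReal + 1
      ≤ ‖p₁ - p₀‖ / ε) :
    ∃ v ∈ L, v ≠ 0 ∧ ∃ p₂ ∈ segment ℝ p₀ p₁, p₂ ∈ (fun x => x + v) '' C₀ :=
  exists_lattice_translate_chamber_meets_segment_general n L C₀ p₀ p₁ ε hε hb₀ hvol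
end

section
/- In the trigonometric double affine Hecke algebra H_c of type A₁, the elements s₁ and s₀ generate a subgroup of the unit group isomorphic to the infinite dihedral group, and the assignment x ↦ degree-1 generator yields a vector-space decomposition H_c ≅ ℂ[x] ⊗ ℂ[D_∞], where D_∞ = ⟨s₀, s₁ : s₀² = s₁² = 1⟩. -/
/-! **Statement 9.**  PBW property for the type `A₁` trigonometric DAHA:  `s₁` and `s₀`
generate a copy of the infinite dihedral group `D_∞ = ⟨s₀, s₁ | s₀² = s₁² = 1⟩ ≅ C₂ ∗ C₂`
inside (the units of) `H_c`, and `{xⁿ·w : n ∈ ℕ, w ∈ D_∞}` is a `ℂ`-basis of `H_c`;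
equivalently the multiplication map `ℂ[x] ⊗ ℂ[D_∞] → H_c` is a linear isomorphism. -/

namespace Stmt9

open FreeAlgebra

abbrev F := FreeAlgebra ℂ (Fin 3)

/-- Defining relations of the type `A₁` trigonometric DAHA `H_c`. -/
inductive DahaRel (c : ℂ) : F → F → Prop
  | s1_sq : DahaRel c (ι ℂ 1 * ι ℂ 1) 1
  | s0_sq : DahaRel c (ι ℂ 2 * ι ℂ 2) 1
  | rel1 : DahaRel c (ι ℂ 1 * ι ℂ 0 + ι ℂ 0 * ι ℂ 1) (algebraMap ℂ F c)
  | rel0 : DahaRel c (ι ℂ 2 * ι ℂ 0 - (1 - ι ℂ 0) * ι ℂ 2 + algebraMap ℂ F c) 0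

/-- The trigonometric DAHA of type `A₁` with parameter `c`. -/
abbrev H (c : ℂ) := RingQuot (DahaRel c)

noncomputable def X (c : ℂ) : H c := RingQuot.mkRingHom (DahaRel c) (ι ℂ 0)
noncomputable def S₁ (c : ℂ) : H c := RingQuot.mkRingHom (DahaRel c) (ι ℂ 1)
noncomputable def S₀ (c : ℂ) : H c := RingQuot.mkRingHom (DahaRel c) (ι ℂ 2)

/-- The infinite dihedral group, presented as the free product `C₂ ∗ C₂`. -/
abbrev Dinf := Monoid.Coprod (Multiplicative (ZMod 2)) (Multiplicative (ZMod 2))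

end Stmt9

/-!
Spanning is formal: the span of the words `xⁿ w` contains `1` and is stable under left
multiplication by `x`, `s₁` and `s₀`, because a relation `s x + x s = a s + κ` moves `s` past
any power of `x` at the cost of shorter words.

Linear independence comes from a representation on `ℂ[x] ⊗ ℂ[D_∞] = (D_∞ →₀ ℂ[x])`: `x` acts by
multiplication and `sᵢ` by a Demazure–Lusztig operator
`w ⊗ p ↦ gᵢ w ⊗ p(2bᵢ - x) + κᵢ w ⊗ (p(x) - p(2bᵢ - x)) / (x - bᵢ)`.
Applied to `1 ⊗ 1`, the word `xⁿ w` gives `w ⊗ xⁿ`, and these vectors are independent.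
-/

namespace Polynomial

variable {R : Type*} [CommRing R] (b : R)

noncomputable def pointReflect : R[X] →ₐ[R] R[X] := aeval (C (2 * b) - X)

@[simp] lemma pointReflect_X : pointReflect b X = C (2 * b) - X := aeval_X _

@[simp] lemma pointReflect_C (r : R) : pointReflect b (C r) = C r := aeval_C _ _

lemma pointReflect_pointReflect (p : R[X]) : pointReflect b (pointReflect b p) = p := by
  rw [← AlgHom.comp_apply, show (pointReflect b).comp (pointReflect b) = AlgHom.id R R[X] from
    algHom_ext (by simp), AlgHom.id_apply]

lemma pointReflect_X_sub_C : pointReflect b (X - C b) = -(X - C b) := by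
  rw [map_sub, pointReflect_X, pointReflect_C, C_mul, C_ofNat]; ring

lemma X_sub_C_mul_divByMonic_sub_pointReflect (p : R[X]) :
    (X - C b) * ((p - pointReflect b p) /ₘ (X - C b)) = p - pointReflect b p := by
  rw [mul_divByMonic_eq_iff_isRoot, IsRoot, eval_sub, pointReflect, ← comp_eq_aeval, eval_comp]
  simp [two_mul]

lemma mul_left_cancel_X_sub_C {p q : R[X]} (h : (X - C b) * p = (X - C b) * q) : p = q :=
  (monic_X_sub_C b).isRegular.left h

noncomputable def demazure : R[X] →ₗ[R] R[X] where
  toFun p := (p - pointReflect b p) /ₘ (X - C b)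
  map_add' p q := mul_left_cancel_X_sub_C b <| by
    rw [mul_add, X_sub_C_mul_divByMonic_sub_pointReflect, X_sub_C_mul_divByMonic_sub_pointReflect,
      X_sub_C_mul_divByMonic_sub_pointReflect, map_add]
    ring
  map_smul' r p := mul_left_cancel_X_sub_C b <| by
    rw [mul_smul_comm, X_sub_C_mul_divByMonic_sub_pointReflect,
      X_sub_C_mul_divByMonic_sub_pointReflect, map_smul, smul_sub, RingHom.id_apply]

lemma X_sub_C_mul_demazure (p : R[X]) : (X - C b) * demazure b p = p - pointReflect b p :=
  X_sub_C_mul_divByMonic_sub_pointReflect b p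

lemma pointReflect_demazure (p : R[X]) : pointReflect b (demazure b p) = demazure b p := by
  have h := congrArg (pointReflect b) (X_sub_C_mul_demazure b p)
  rw [map_mul, pointReflect_X_sub_C, map_sub, pointReflect_pointReflect] at h
  refine mul_left_cancel_X_sub_C b ?_
  linear_combination -h - X_sub_C_mul_demazure b p

lemma demazure_pointReflect (p : R[X]) : demazure b (pointReflect b p) = -demazure b p :=
  mul_left_cancel_X_sub_C b <| by
    rw [X_sub_C_mul_demazure, pointReflect_pointReflect, mul_neg, X_sub_C_mul_demazure, neg_sub]

lemma demazure_demazure (p : R[X]) : demazure b (demazure b p) = 0 :=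
  mul_left_cancel_X_sub_C b <| by
    rw [X_sub_C_mul_demazure, pointReflect_demazure, sub_self, mul_zero]

lemma demazure_one : demazure b 1 = 0 :=
  mul_left_cancel_X_sub_C b <| by rw [X_sub_C_mul_demazure, map_one, sub_self, mul_zero]

lemma pointReflect_X_mul_add (p : R[X]) :
    pointReflect b (X * p) + X * pointReflect b p = C (2 * b) * pointReflect b p := by
  rw [map_mul, pointReflect_X]; ring

lemma demazure_X_mul_add (p : R[X]) :
    demazure b (X * p) + X * demazure b p = C (2 * b) * demazure b p + 2 * p :=
  mul_left_cancel_X_sub_C b <| by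
    rw [mul_add, X_sub_C_mul_demazure, map_mul, pointReflect_X, C_mul, C_ofNat]
    linear_combination (X - 2 * C b) * X_sub_C_mul_demazure b p

end Polynomial

def zmodPowersHom {M : Type*} [Monoid M] (n : ℕ) [NeZero n] (u : M) (hu : u ^ n = 1) :
    Multiplicative (ZMod n) →* M where
  toFun a := u ^ (Multiplicative.toAdd a).val
  map_one' := by simp
  map_mul' a b := by simp only [toAdd_mul, ZMod.val_add, ← pow_eq_pow_mod _ hu, pow_add]

lemma zmodPowersHom_two_ofAdd_one {M : Type*} [Monoid M] (u : M) (hu : u ^ 2 = 1) :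
    zmodPowersHom 2 u hu (Multiplicative.ofAdd 1) = u :=
  pow_one u

section LeftStable

variable {R A : Type*} [CommRing R] [Ring A] [Algebra R A] {L : Submodule R A}

theorem Submodule.eq_top_of_one_mem_of_mul_mem {s : Set A} (hs : Algebra.adjoin R s = ⊤)
    (h1 : 1 ∈ L) (hL : ∀ x ∈ s, ∀ m ∈ L, x * m ∈ L) : L = ⊤ := by
  suffices h : ∀ a ∈ Algebra.adjoin R s, ∀ m ∈ L, a * m ∈ L from
    eq_top_iff.mpr fun a _ => mul_one a ▸ h a (hs ▸ Algebra.mem_top) 1 h1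
  intro a ha
  induction ha using Algebra.adjoin_induction with
  | mem x hx => exact hL x hx
  | algebraMap r => intro m hm; rw [← Algebra.smul_def]; exact L.smul_mem r hm
  | add x y _ _ hx hy => intro m hm; rw [add_mul]; exact L.add_mem (hx m hm) (hy m hm)
  | mul x y _ _ hx hy => intro m hm; rw [mul_assoc]; exact hx _ (hy m hm)

theorem Submodule.mul_pow_mul_mem {x s m : A} {a κ : R}
    (hrel : s * x + x * s = a • s + algebraMap R A κ) (hx : ∀ m ∈ L, x * m ∈ L)
    (hm : m ∈ L) (hsm : s * m ∈ L) (n : ℕ) : s * (x ^ n * m) ∈ L := by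
  have hxm : ∀ k : ℕ, x ^ k * m ∈ L := fun k => by
    induction k with
    | zero => rwa [pow_zero, one_mul]
    | succ k ih => rw [pow_succ', mul_assoc]; exact hx _ ih
  induction n with
  | zero => rwa [pow_zero, one_mul]
  | succ n ih =>
    have hsx : s * x = a • s + algebraMap R A κ - x * s := eq_sub_of_add_eq hrel
    rw [pow_succ', mul_assoc, ← mul_assoc, hsx, sub_mul, add_mul, smul_mul_assoc,
      ← Algebra.smul_def, mul_assoc]
    exact L.sub_mem (L.add_mem (L.smul_mem a ih) (L.smul_mem κ (hxm n))) (hx _ ih)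

theorem Submodule.mul_mem_span_of_mul_mem {S : Set A} {x : A}
    (hS : ∀ m ∈ S, x * m ∈ Submodule.span R S) :
    ∀ m ∈ Submodule.span R S, x * m ∈ Submodule.span R S :=
  fun _ hm => (Submodule.span_le (p := (Submodule.span R S).comap (LinearMap.mulLeft R x))).mpr
    hS hm

end LeftStable

open Polynomial

theorem Finsupp.linearIndependent_single_X_pow (R G : Type*) [CommRing R] :
    LinearIndependent R (fun p : ℕ × G => Finsupp.single p.2 (X ^ p.1 : R[X])) := by
  have hX : LinearIndependent R (fun n : ℕ => (X ^ n : R[X])) := by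
    simpa [coe_basisMonomials, ← X_pow_eq_monomial] using (basisMonomials R).linearIndependent
  have h := (Finsupp.linearIndependent_single (R := R) (M := R[X]) (ι := G) (φ := fun _ => ℕ)
    (fun _ n => X ^ n) fun _ => hX).comp (fun p : ℕ × G => (⟨p.2, p.1⟩ : Σ _ : G, ℕ))
      ((Equiv.sigmaEquivProd G ℕ).symm.injective.comp Prod.swap_injective)
  exact h

namespace DemazureLusztig

variable {R G : Type*} [CommRing R]

noncomputable def mulX : Module.End R (G →₀ R[X]) :=
  Finsupp.mapRange.linearMap (LinearMap.mulLeft R X)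

noncomputable def op [Monoid G] (g : G) (b κ : R) : Module.End R (G →₀ R[X]) :=
  Finsupp.lsum R fun w => Finsupp.lsingle (g * w) ∘ₗ (pointReflect b).toLinearMap +
    κ • Finsupp.lsingle w ∘ₗ demazure b

lemma mulX_single (w : G) (p : R[X]) : mulX (Finsupp.single w p) = Finsupp.single w (X * p) := by
  simp [mulX]

lemma mulX_pow_single (n : ℕ) (w : G) (p : R[X]) :
    (mulX ^ n) (Finsupp.single w p) = Finsupp.single w (X ^ n * p) := by
  induction n with
  | zero => simp
  | succ n ih => rw [pow_succ', Module.End.mul_apply, ih, mulX_single, pow_succ', mul_assoc]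

variable [Monoid G] (g : G) (b κ : R)

lemma op_single (w : G) (p : R[X]) :
    op g b κ (Finsupp.single w p) =
      Finsupp.single (g * w) (pointReflect b p) + κ • Finsupp.single w (demazure b p) := by
  simp [op]

lemma op_single_one (w : G) : op g b κ (Finsupp.single w 1) = Finsupp.single (g * w) 1 := by
  simp [op_single, demazure_one]

lemma op_mul_self {g : G} (hg : g * g = 1) : op g b κ * op g b κ = 1 := by
  refine Finsupp.lhom_ext fun w p => ?_
  rw [Module.End.mul_apply, op_single, map_add, map_smul, op_single, op_single, ← mul_assoc, hg,
    one_mul, pointReflect_pointReflect, demazure_pointReflect, pointReflect_demazure,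
    demazure_demazure]
  simp [Finsupp.smul_single]

lemma op_mul_mulX_add_mulX_mul :
    op g b κ * mulX + mulX * op g b κ = (2 * b) • op g b κ + algebraMap R _ (2 * κ) := by
  refine Finsupp.lhom_ext fun w p => ?_
  have hr := pointReflect_X_mul_add b p
  have hd := demazure_X_mul_add b p
  simp only [LinearMap.add_apply, Module.End.mul_apply, LinearMap.smul_apply,
    Module.algebraMap_end_apply, mulX_single, op_single, map_add, map_smul]
  rw [eq_sub_of_add_eq hr, eq_sub_of_add_eq hd]
  simp only [Finsupp.single_sub, Finsupp.single_add, C_mul', two_mul, ← Finsupp.smul_single]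
  module

end DemazureLusztig

theorem FreeAlgebra.adjoin_range_comp_ι_eq_top {R A ι : Type*} [CommSemiring R] [Semiring A]
    [Algebra R A] {f : FreeAlgebra R ι →ₐ[R] A} (hf : Function.Surjective f) :
    Algebra.adjoin R (Set.range (f ∘ FreeAlgebra.ι R)) = ⊤ := by
  rw [Set.range_comp, ← AlgHom.map_adjoin, FreeAlgebra.adjoin_range_ι, Algebra.map_top,
    AlgHom.range_eq_top]
  exact hf

namespace Stmt9

open scoped Polynomial
open DemazureLusztig FreeAlgebra

section

variable (c : ℂ)

lemma mkAlgHom_eq_mkRingHom (f : F) :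
    RingQuot.mkAlgHom ℂ (DahaRel c) f = RingQuot.mkRingHom (DahaRel c) f := by
  rw [← RingQuot.mkAlgHom_coe ℂ]; rfl

lemma mkAlgHom_ι_zero : RingQuot.mkAlgHom ℂ (DahaRel c) (ι ℂ 0) = X c :=
  mkAlgHom_eq_mkRingHom c _

lemma mkAlgHom_ι_one : RingQuot.mkAlgHom ℂ (DahaRel c) (ι ℂ 1) = S₁ c :=
  mkAlgHom_eq_mkRingHom c _

lemma mkAlgHom_ι_two : RingQuot.mkAlgHom ℂ (DahaRel c) (ι ℂ 2) = S₀ c :=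
  mkAlgHom_eq_mkRingHom c _

lemma S₁_mul_self : S₁ c * S₁ c = 1 := by
  have h := RingQuot.mkAlgHom_rel ℂ (DahaRel.s1_sq (c := c))
  rwa [map_mul, map_one, mkAlgHom_ι_one] at h

lemma S₀_mul_self : S₀ c * S₀ c = 1 := by
  have h := RingQuot.mkAlgHom_rel ℂ (DahaRel.s0_sq (c := c))
  rwa [map_mul, map_one, mkAlgHom_ι_two] at h

lemma S₁_mul_X_add_X_mul_S₁ : S₁ c * X c + X c * S₁ c = algebraMap ℂ (H c) c := by
  have h := RingQuot.mkAlgHom_rel ℂ (DahaRel.rel1 (c := c))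
  rwa [map_add, map_mul, map_mul, AlgHom.commutes, mkAlgHom_ι_zero, mkAlgHom_ι_one] at h

lemma S₀_mul_X_add_X_mul_S₀ : S₀ c * X c + X c * S₀ c = S₀ c - algebraMap ℂ (H c) c := by
  have h := RingQuot.mkAlgHom_rel ℂ (DahaRel.rel0 (c := c))
  rw [map_add, map_sub, map_mul, map_mul, map_sub, map_one, map_zero, AlgHom.commutes,
    mkAlgHom_ι_zero, mkAlgHom_ι_two, sub_mul, one_mul] at h
  rw [← sub_eq_zero, ← h]
  abel

def g₁ : Dinf := Monoid.Coprod.inl (Multiplicative.ofAdd 1)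
def g₀ : Dinf := Monoid.Coprod.inr (Multiplicative.ofAdd 1)

lemma g₁_mul_self : g₁ * g₁ = 1 := by
  rw [g₁, ← map_mul, ← ofAdd_add, show (1 + 1 : ZMod 2) = 0 from rfl, ofAdd_zero, map_one]

lemma g₀_mul_self : g₀ * g₀ = 1 := by
  rw [g₀, ← map_mul, ← ofAdd_add, show (1 + 1 : ZMod 2) = 0 from rfl, ofAdd_zero, map_one]

noncomputable def phi : Dinf →* H c :=
  Monoid.Coprod.lift (zmodPowersHom 2 (S₁ c) ((sq _).trans (S₁_mul_self c)))
    (zmodPowersHom 2 (S₀ c) ((sq _).trans (S₀_mul_self c)))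

lemma phi_g₁ : phi c g₁ = S₁ c := by
  rw [phi, g₁, Monoid.Coprod.lift_apply_inl, zmodPowersHom_two_ofAdd_one]

lemma phi_g₀ : phi c g₀ = S₀ c := by
  rw [phi, g₀, Monoid.Coprod.lift_apply_inr, zmodPowersHom_two_ofAdd_one]

-- The relations `s₁x + xs₁ = c` and `s₀x + xs₀ = s₀ - c`, compared with
-- `op_mul_mulX_add_mulX_mul`, force the parameters `(b, κ) = (0, c/2)` and `(1/2, -c/2)`.
noncomputable def polyRepFree : F →ₐ[ℂ] Module.End ℂ (Dinf →₀ ℂ[X]) :=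
  FreeAlgebra.lift ℂ ![mulX, op g₁ 0 (c / 2), op g₀ 2⁻¹ (-c / 2)]

lemma polyRepFree_rel ⦃f f' : F⦄ (h : DahaRel c f f') : polyRepFree c f = polyRepFree c f' := by
  cases h <;> simp only [polyRepFree, map_mul, map_add, map_sub, map_one, map_zero,
    AlgHom.commutes, lift_ι_apply, Matrix.cons_val]
  case s1_sq => exact op_mul_self _ _ g₁_mul_self
  case s0_sq => exact op_mul_self _ _ g₀_mul_self
  case rel1 =>
    rw [op_mul_mulX_add_mulX_mul, mul_zero, zero_smul, zero_add, mul_div_cancel₀ c two_ne_zero]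
  case rel0 =>
    refine LinearMap.ext fun v => ?_
    have h := LinearMap.congr_fun (op_mul_mulX_add_mulX_mul g₀ 2⁻¹ (-c / 2)) v
    rw [mul_inv_cancel₀ two_ne_zero, one_smul, show (2 : ℂ) * (-c / 2) = -c by ring] at h
    simp only [LinearMap.add_apply, LinearMap.sub_apply, Module.End.mul_apply,
      Module.End.one_apply, Module.algebraMap_end_apply, LinearMap.zero_apply] at h ⊢
    rw [eq_sub_of_add_eq' h]
    module

noncomputable def polyRep : H c →ₐ[ℂ] Module.End ℂ (Dinf →₀ ℂ[X]) :=
  RingQuot.liftAlgHom ℂ ⟨polyRepFree c, polyRepFree_rel c⟩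

lemma polyRep_mkRingHom (f : F) :
    polyRep c (RingQuot.mkRingHom (DahaRel c) f) = polyRepFree c f := by
  rw [← mkAlgHom_eq_mkRingHom, polyRep, RingQuot.liftAlgHom_mkAlgHom_apply]

lemma polyRep_X : polyRep c (X c) = mulX := by
  simp [X, polyRep_mkRingHom, polyRepFree]

lemma polyRep_S₁ : polyRep c (S₁ c) = op g₁ 0 (c / 2) := by
  simp [S₁, polyRep_mkRingHom, polyRepFree]

lemma polyRep_S₀ : polyRep c (S₀ c) = op g₀ 2⁻¹ (-c / 2) := by
  simp [S₀, polyRep_mkRingHom, polyRepFree]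

lemma polyRep_phi_single_one (w v : Dinf) :
    polyRep c (phi c w) (Finsupp.single v 1) = Finsupp.single (w * v) 1 := by
  have zmod_two : ∀ m : Multiplicative (ZMod 2), m = 1 ∨ m = Multiplicative.ofAdd 1 := by decide
  induction w using Monoid.Coprod.induction_on generalizing v with
  | inl m =>
    rcases zmod_two m with rfl | rfl
    · simp
    · rw [← g₁, phi_g₁, polyRep_S₁, op_single_one]
  | inr m =>
    rcases zmod_two m with rfl | rfl
    · simp
    · rw [← g₀, phi_g₀, polyRep_S₀, op_single_one]
  | mul x y hx hy => rw [map_mul, map_mul, Module.End.mul_apply, hy, hx, mul_assoc]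

lemma polyRep_X_pow_mul_phi_single_one (n : ℕ) (w : Dinf) :
    polyRep c (X c ^ n * phi c w) (Finsupp.single 1 1) =
      Finsupp.single w (Polynomial.X ^ n) := by
  rw [map_mul, map_pow, polyRep_X, Module.End.mul_apply, polyRep_phi_single_one, mul_one,
    mulX_pow_single, mul_one]

theorem linearIndependent_X_pow_mul_phi :
    LinearIndependent ℂ (fun p : ℕ × Dinf => X c ^ p.1 * phi c p.2) := by
  let ev := LinearMap.applyₗ (Finsupp.single 1 1) ∘ₗ (polyRep c).toLinearMap
  have hev : ev ∘ (fun p : ℕ × Dinf => X c ^ p.1 * phi c p.2) =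
      fun p => Finsupp.single p.2 (Polynomial.X ^ p.1) :=
    funext fun p => polyRep_X_pow_mul_phi_single_one c p.1 p.2
  exact .of_comp ev (hev ▸ Finsupp.linearIndependent_single_X_pow ℂ Dinf)

theorem phi_injective : Function.Injective (phi c) := fun w w' h => by
  simpa using (linearIndependent_X_pow_mul_phi c).injective (a₁ := (0, w)) (a₂ := (0, w'))
    (by simp [h])

theorem span_X_pow_mul_phi_eq_top :
    Submodule.span ℂ (Set.range fun p : ℕ × Dinf => X c ^ p.1 * phi c p.2) = ⊤ := by
  set L := Submodule.span ℂ (Set.range fun p : ℕ × Dinf => X c ^ p.1 * phi c p.2)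
  have mem (n : ℕ) (w : Dinf) : X c ^ n * phi c w ∈ L := Submodule.subset_span ⟨(n, w), rfl⟩
  have mem_phi (w : Dinf) : phi c w ∈ L := by simpa using mem 0 w
  have hX : ∀ m ∈ L, X c * m ∈ L := Submodule.mul_mem_span_of_mul_mem <| by
    rintro _ ⟨⟨n, w⟩, rfl⟩
    simpa [← mul_assoc, ← pow_succ'] using mem (n + 1) w
  have hS {g : Dinf} {a κ : ℂ}
      (hrel : phi c g * X c + X c * phi c g = a • phi c g + algebraMap ℂ (H c) κ) :
      ∀ m ∈ L, phi c g * m ∈ L := Submodule.mul_mem_span_of_mul_mem <| by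
    rintro _ ⟨⟨n, w⟩, rfl⟩
    exact Submodule.mul_pow_mul_mem hrel hX (mem_phi w) (map_mul (phi c) g w ▸ mem_phi _) n
  have hS₁ : ∀ m ∈ L, S₁ c * m ∈ L := phi_g₁ c ▸ hS (a := 0) (κ := c) <| by
    rw [zero_smul, zero_add, S₁_mul_X_add_X_mul_S₁]
  have hS₀ : ∀ m ∈ L, S₀ c * m ∈ L := phi_g₀ c ▸ hS (a := 1) (κ := -c) <| by
    rw [one_smul, map_neg, ← sub_eq_add_neg, S₀_mul_X_add_X_mul_S₀]
  refine Submodule.eq_top_of_one_mem_of_mul_mem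
    (FreeAlgebra.adjoin_range_comp_ι_eq_top (RingQuot.mkAlgHom_surjective ℂ (DahaRel c)))
    (by simpa using mem_phi 1) ?_
  rintro _ ⟨i, rfl⟩
  fin_cases i
  · simpa [mkAlgHom_ι_zero] using hX
  · simpa [mkAlgHom_ι_one] using hS₁
  · simpa [mkAlgHom_ι_two] using hS₀

end

/-- There is an (injective) monoid homomorphism `φ : D_∞ → H_c` sending the
two generating involutions to `s₁` and `s₀`, and the family `xⁿ · φ(w)` (for `n ∈ ℕ`,
`w ∈ D_∞`) is a `ℂ`-basis of `H_c`: it is linearly independent and spans.  In particular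
`s₁, s₀` generate a subgroup of the unit group of `H_c` isomorphic to `D_∞`, and
multiplication induces a vector-space isomorphism `ℂ[x] ⊗ ℂ[D_∞] ≅ H_c`. -/
theorem daha_pbw (c : ℂ) :
    ∃ φ : Dinf →* H c,
      φ (Monoid.Coprod.inl (Multiplicative.ofAdd (1 : ZMod 2))) = S₁ c ∧
      φ (Monoid.Coprod.inr (Multiplicative.ofAdd (1 : ZMod 2))) = S₀ c ∧
      Function.Injective φ ∧
      LinearIndependent ℂ (fun p : ℕ × Dinf => X c ^ p.1 * φ p.2) ∧
      Submodule.span ℂ (Set.range fun p : ℕ × Dinf => X c ^ p.1 * φ p.2) = ⊤ :=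
  ⟨phi c, phi_g₁ c, phi_g₀ c, phi_injective c, linearIndependent_X_pow_mul_phi c,
    span_X_pow_mul_phi_eq_top c⟩

end Stmt9
end

section
/- Let E be an ℕ-graded ring E = ⊕_{n≥0} E_n admitting a ℤ²-indexed exhaustive filtration compatible with multiplication such that the associated bigraded ring contains a commutative graded ℂ-subalgebra A of finite type with associated graded finitely generated as a left and right A-module. Then E is left and right noetherian. -/
/-!
Encode the bifiltration by its Rees ring `R = ⨁ (n, m), F n m`, graded by total degree, with
`s : R → E` setting `ζ = δ = 1` and `σ : R → G` reducing modulo `(ζ, δ)`. To a left ideal `I` of `E`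
attach the leading ideal of `G` generated by the symbols of homogeneous lifts of elements of `I`.
If `I ≤ J` have the same leading ideal then `J ≤ I`, by induction on the total degree: a lift of
degree `k` of an element of `J` differs from the degree-`k` part of a lift from `I` by an element of
`ker σ`, and such an element has the same image in `E` as an element of degree `k - 1`. Hence taking
leading ideals is strictly monotone, and noetherianity passes from `G` to `E`; right ideals are
ideals of the opposite rings, to which the same data transfer. Finally `G` is noetherian as a finite
module over a finitely generated commutative `ℂ`-algebra.
-/

universe u

section ReesRing

variable {R E G : Type*} [Ring R] [Ring E] [Ring G]

/-- `P k` is the projection onto total degree `k`; `exists_lower` says that in degree `k` the kernel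
of `σ` consists, modulo the kernel of `s`, of multiples of `ζ` and `δ`. -/
structure IsReesRing (s : R →+* E) (σ : R →+* G) (P : ℤ → R →+ R) : Prop where
  proj_idem : ∀ k z, P k (P k z) = P k z
  proj_mul_left : ∀ i k g z, P k (P i g * z) = P i g * P (k - i) z
  proj_mul_right : ∀ i k g z, P k (z * P i g) = P (k - i) z * P i g
  proj_eq_zero_of_neg : ∀ k < 0, ∀ z, P k z = 0
  exists_proj_eq : ∀ a, ∃ k z, P k z = z ∧ s z = a
  map_proj_eq_zero : ∀ z, σ z = 0 → ∀ k, σ (P k z) = 0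
  exists_lower : ∀ k z, P k z = z → σ z = 0 → ∃ z', P (k - 1) z' = z' ∧ s z' = s z
  surjective : Function.Surjective σ

namespace IsReesRing

variable {s : R →+* E} {σ : R →+* G} {P : ℤ → R →+ R}

variable (s σ P) in
def leadingIdeal (I : Ideal E) : Ideal G :=
  Ideal.map σ (Ideal.span {z | ∃ k, P k z = z ∧ s z ∈ I})

lemma leadingIdeal_mono : Monotone (leadingIdeal s σ P) := fun _ _ hIJ =>
  Ideal.map_mono <| Ideal.span_mono fun _ ⟨k, hk, hz⟩ => ⟨k, hk, hIJ hz⟩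

lemma map_proj_mem_of_mem_span (h : IsReesRing s σ P) {I : Ideal E} {y : R}
    (hy : y ∈ Ideal.span {z | ∃ k, P k z = z ∧ s z ∈ I}) (k : ℤ) : s (P k y) ∈ I := by
  induction hy using Submodule.closure_induction with
  | zero => simp
  | add _ _ _ _ hx hy => simpa using add_mem hx hy
  | smul_mem r z hz =>
    obtain ⟨j, hj, hzI⟩ := hz
    rw [smul_eq_mul, ← hj, h.proj_mul_right, map_mul, hj]
    exact I.mul_mem_left _ hzI

lemma le_of_leadingIdeal_le (h : IsReesRing s σ P) {I J : Ideal E} (hIJ : I ≤ J)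
    (hL : leadingIdeal s σ P J ≤ leadingIdeal s σ P I) : J ≤ I := by
  suffices key : ∀ k z, P k z = z → s z ∈ J → s z ∈ I by
    intro a ha
    obtain ⟨k, z, hz, rfl⟩ := h.exists_proj_eq a
    exact key k z hz ha
  have of_neg : ∀ k < 0, ∀ z, P k z = z → s z ∈ J → s z ∈ I := fun k hk z hz _ => by
    rw [← hz, h.proj_eq_zero_of_neg k hk, map_zero]
    exact I.zero_mem
  have step : ∀ k, (∀ z, P (k - 1) z = z → s z ∈ J → s z ∈ I) →
      ∀ z, P k z = z → s z ∈ J → s z ∈ I := by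
    intro k ih z hz hzJ
    have hσz : σ z ∈ leadingIdeal s σ P I :=
      hL (Ideal.mem_map_of_mem σ (Ideal.subset_span ⟨k, hz, hzJ⟩))
    obtain ⟨y, hy, hσy⟩ := (Ideal.mem_map_iff_of_surjective σ h.surjective).mp hσz
    have hyI : s (P k y) ∈ I := h.map_proj_mem_of_mem_span hy k
    have hdiff : σ (z - P k y) = 0 := by
      simpa [hz, hσy] using h.map_proj_eq_zero (z - y) (by simp [hσy]) k
    obtain ⟨z', hz', hsz'⟩ := h.exists_lower k (z - P k y)
      (by rw [map_sub, hz, h.proj_idem]) hdiff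
    have hz'I : s z' ∈ I := ih z' hz' (by
      rw [hsz', map_sub]
      exact J.sub_mem hzJ (hIJ hyI))
    rw [map_sub] at hsz'
    simpa [hsz'] using I.add_mem hz'I hyI
  intro k
  refine Int.inductionOn' k (-1) (of_neg (-1) (by norm_num)) (fun k _ ih => step _ ?_)
    (fun k hk _ => of_neg (k - 1) (by omega))
  simpa using ih

lemma isNoetherianRing (h : IsReesRing s σ P) [IsNoetherianRing G] : IsNoetherianRing E := by
  rw [isNoetherianRing_iff, isNoetherian_iff']
  refine StrictMono.wellFoundedGT (f := leadingIdeal s σ P) fun I J hIJ => ?_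
  exact lt_of_le_not_ge (leadingIdeal_mono hIJ.le) fun hL =>
    hIJ.not_ge (h.le_of_leadingIdeal_le hIJ.le hL)

lemma op (h : IsReesRing s σ P) :
    IsReesRing (RingHom.op s) (RingHom.op σ) fun k => AddMonoidHom.mulOp (P k) where
  proj_idem k z := congrArg MulOpposite.op (h.proj_idem k z.unop)
  proj_mul_left i k g z := congrArg MulOpposite.op (h.proj_mul_right i k g.unop z.unop)
  proj_mul_right i k g z := congrArg MulOpposite.op (h.proj_mul_left i k g.unop z.unop)
  proj_eq_zero_of_neg k hk z := congrArg MulOpposite.op (h.proj_eq_zero_of_neg k hk z.unop)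
  exists_proj_eq a := by
    obtain ⟨k, z, hz, hsz⟩ := h.exists_proj_eq a.unop
    exact ⟨k, MulOpposite.op z, congrArg MulOpposite.op hz, congrArg MulOpposite.op hsz⟩
  map_proj_eq_zero z hz k :=
    congrArg MulOpposite.op (h.map_proj_eq_zero z.unop (congrArg MulOpposite.unop hz) k)
  exists_lower k z hz hσz := by
    obtain ⟨z', hz', hsz'⟩ :=
      h.exists_lower k z.unop (congrArg MulOpposite.unop hz) (congrArg MulOpposite.unop hσz)
    exact ⟨MulOpposite.op z', congrArg MulOpposite.op hz', congrArg MulOpposite.op hsz'⟩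
  surjective g := by
    obtain ⟨z, hz⟩ := h.surjective g.unop
    exact ⟨MulOpposite.op z, congrArg MulOpposite.op hz⟩

end IsReesRing

end ReesRing

namespace DirectSum

variable {E G : Type*} [Ring E] [Ring G] (𝓕 : ℤ × ℤ → AddSubgroup E)

def totalProj (k : ℤ) : (⨁ p, 𝓕 p) →+ ⨁ p, 𝓕 p :=
  DFinsupp.filterAddMonoidHom _ fun p => p.1 + p.2 = k

variable {𝓕}

lemma totalProj_apply (k : ℤ) (z : ⨁ p, 𝓕 p) (p : ℤ × ℤ) :
    totalProj 𝓕 k z p = if p.1 + p.2 = k then z p else 0 :=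
  DFinsupp.filter_apply _ _ _

lemma totalProj_of (k : ℤ) (p : ℤ × ℤ) (x : 𝓕 p) :
    totalProj 𝓕 k (of _ p x) = if p.1 + p.2 = k then of _ p x else 0 :=
  DFinsupp.filter_single _ _ _

lemma totalProj_idem (k : ℤ) (z : ⨁ p, 𝓕 p) :
    totalProj 𝓕 k (totalProj 𝓕 k z) = totalProj 𝓕 k z := by
  ext p
  simp only [totalProj_apply]
  split_ifs <;> rfl

lemma totalProj_of_neg (hneg : ∀ p : ℤ × ℤ, p.1 < 0 ∨ p.2 < 0 → 𝓕 p = ⊥) {k : ℤ} (hk : k < 0)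
    (z : ⨁ p, 𝓕 p) : totalProj 𝓕 k z = 0 := by
  ext p
  rw [totalProj_apply]
  split_ifs with hp
  · simpa using (AddSubgroup.eq_bot_iff_forall _).mp (hneg p (by omega)) _ (z p).2
  · rfl

variable [SetLike.GradedMonoid 𝓕]

lemma totalProj_mul_left (i k : ℤ) (g z : ⨁ p, 𝓕 p) :
    totalProj 𝓕 k (totalProj 𝓕 i g * z) = totalProj 𝓕 i g * totalProj 𝓕 (k - i) z := by
  induction g using DirectSum.induction_on with
  | zero => simp
  | add g g' hg hg' => simp [add_mul, hg, hg']
  | of p x =>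
    induction z using DirectSum.induction_on with
    | zero => simp
    | add z z' hz hz' => simp [mul_add, hz, hz']
    | of q y =>
      simp only [totalProj_of]
      split_ifs <;> simp [of_mul_of, totalProj_of] <;> omega

lemma totalProj_mul_right (i k : ℤ) (g z : ⨁ p, 𝓕 p) :
    totalProj 𝓕 k (z * totalProj 𝓕 i g) = totalProj 𝓕 (k - i) z * totalProj 𝓕 i g := by
  induction g using DirectSum.induction_on with
  | zero => simp
  | add g g' hg hg' => simp [mul_add, hg, hg']
  | of p x =>
    induction z using DirectSum.induction_on with
    | zero => simp
    | add z z' hz hz' => simp [add_mul, hz, hz']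
    | of q y =>
      simp only [totalProj_of]
      split_ifs <;> simp [of_mul_of, totalProj_of] <;> omega

lemma exists_lower_of_mem_sup (k : ℤ) (z : ⨁ p, 𝓕 p) (hz : totalProj 𝓕 k z = z)
    (hlow : ∀ p, (z p : E) ∈ 𝓕 (p.1 - 1, p.2) ⊔ 𝓕 (p.1, p.2 - 1)) :
    ∃ z', totalProj 𝓕 (k - 1) z' = z' ∧ coeRingHom 𝓕 z' = coeRingHom 𝓕 z := by
  classical
  choose u hu w hw huw using fun p => AddSubgroup.mem_sup.mp (hlow p)
  have hdeg : ∀ p ∈ z.support, p.1 + p.2 = k := fun p hp => by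
    by_contra hpk
    apply DFinsupp.mem_support_iff.mp hp
    rw [← hz, totalProj_apply, if_neg hpk]
  refine ⟨∑ p ∈ z.support, (of _ (p.1 - 1, p.2) ⟨u p, hu p⟩ + of _ (p.1, p.2 - 1) ⟨w p, hw p⟩),
    ?_, ?_⟩
  · rw [map_sum]
    refine Finset.sum_congr rfl fun p hp => ?_
    have := hdeg p hp
    rw [map_add, totalProj_of, totalProj_of, if_pos (by simp; omega), if_pos (by simp; omega)]
  · conv_rhs => rw [← sum_support_of z]
    simp only [map_sum, map_add, coeRingHom_of, huw]

variable {gr : ∀ p, 𝓕 p →+ G} {σ : (⨁ p, 𝓕 p) →+* G}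

lemma map_eq_zero_iff_of_isInternal (hσ : ∀ p x, σ (of _ p x) = gr p x)
    (hint : IsInternal fun p => (gr p).range) (z : ⨁ p, 𝓕 p) :
    σ z = 0 ↔ ∀ p, gr p (z p) = 0 := by
  have hfac : (σ : (⨁ p, 𝓕 p) →+ G) =
      (DirectSum.coeAddMonoidHom fun p => (gr p).range).comp (map fun p => (gr p).rangeRestrict) :=
    DirectSum.addHom_ext fun p x => by simp [hσ]
  rw [← AddMonoidHom.coe_coe σ, hfac, AddMonoidHom.comp_apply, hint.injective.eq_iff' (map_zero _),
    DirectSum.ext_iff]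
  simp [Subtype.ext_iff]

lemma surjective_of_isInternal (hσ : ∀ p x, σ (of _ p x) = gr p x)
    (hint : IsInternal fun p => (gr p).range) : Function.Surjective σ := by
  intro g
  obtain ⟨w, rfl⟩ := hint.surjective g
  induction w using DirectSum.induction_on with
  | zero => exact ⟨0, by simp⟩
  | of p y =>
    obtain ⟨x, hx⟩ := y.2
    exact ⟨of _ p x, by simp [hσ, hx]⟩
  | add w w' hw hw' =>
    obtain ⟨z, hz⟩ := hw
    obtain ⟨z', hz'⟩ := hw'
    exact ⟨z + z', by simp [hz, hz']⟩

lemma isReesRing_coeRingHom (hneg : ∀ p : ℤ × ℤ, p.1 < 0 ∨ p.2 < 0 → 𝓕 p = ⊥)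
    (hexh : ∀ a : E, ∃ p, a ∈ 𝓕 p)
    (hker : ∀ p (a : 𝓕 p), gr p a = 0 ↔ (a : E) ∈ 𝓕 (p.1 - 1, p.2) ⊔ 𝓕 (p.1, p.2 - 1))
    (hσ : ∀ p x, σ (of _ p x) = gr p x) (hint : IsInternal fun p => (gr p).range) :
    IsReesRing (coeRingHom 𝓕) σ (totalProj 𝓕) where
  proj_idem := totalProj_idem
  proj_mul_left := totalProj_mul_left
  proj_mul_right := totalProj_mul_right
  proj_eq_zero_of_neg _ hk := totalProj_of_neg hneg hk
  exists_proj_eq a := by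
    obtain ⟨p, hp⟩ := hexh a
    exact ⟨p.1 + p.2, of _ p ⟨a, hp⟩, by simp [totalProj_of], coeRingHom_of _ _ _⟩
  map_proj_eq_zero z hz k := by
    rw [map_eq_zero_iff_of_isInternal hσ hint] at hz ⊢
    intro p
    rw [totalProj_apply]
    split_ifs
    exacts [hz p, map_zero _]
  exists_lower k z hz hσz := exists_lower_of_mem_sup k z hz fun p =>
    (hker p (z p)).mp ((map_eq_zero_iff_of_isInternal hσ hint z).mp hσz p)
  surjective := surjective_of_isInternal hσ hint

end DirectSum

section Noetherian

variable {K G : Type*} [CommRing K] [Ring G] [Algebra K G]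

lemma Subalgebra.FG.op {A : Subalgebra K G} (hA : A.FG) : A.op.FG := by
  classical
  obtain ⟨s, rfl⟩ := hA
  refine ⟨s.image MulOpposite.op, ?_⟩
  rw [Subalgebra.op_adjoin, Finset.coe_image,
    Set.image_eq_preimage_of_inverse MulOpposite.unop_op MulOpposite.op_unop]

variable (A : Subalgebra K G)

lemma Subalgebra.moduleFinite_of_forall_mem_span {t : Set G} (htf : t.Finite)
    (ht : ∀ g : G, g ∈ Submodule.span K {x : G | ∃ a ∈ A, ∃ v ∈ t, x = a * v}) :
    Module.Finite A G := by
  refine ⟨Submodule.fg_def.mpr ⟨t, htf, eq_top_iff.mpr fun g _ => ?_⟩⟩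
  refine (Submodule.span_le (p := (Submodule.span A (t : Set G)).restrictScalars K)).mpr ?_ (ht g)
  rintro _ ⟨a, ha, v, hv, rfl⟩
  exact Submodule.smul_mem _ (⟨a, ha⟩ : A) (Submodule.subset_span hv)

lemma Subalgebra.forall_mem_span_op (t : Set G)
    (ht : ∀ g : G, g ∈ Submodule.span K {x : G | ∃ a ∈ A, ∃ v ∈ t, x = v * a}) (g : Gᵐᵒᵖ) :
    g ∈ Submodule.span K {x : Gᵐᵒᵖ | ∃ a ∈ A.op, ∃ v ∈ MulOpposite.unop ⁻¹' t, x = a * v} := by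
  have hg := Submodule.mem_map_of_mem (f := (MulOpposite.opLinearEquiv K).toLinearMap) (ht g.unop)
  rw [Submodule.map_span] at hg
  refine Submodule.span_mono ?_ hg
  rintro _ ⟨_, ⟨a, ha, v, hv, rfl⟩, rfl⟩
  exact ⟨MulOpposite.op a, ha, MulOpposite.op v, hv, rfl⟩

lemma Subalgebra.isNoetherianRing_of_moduleFinite [IsNoetherianRing K]
    (hcomm : ∀ x ∈ A, ∀ y ∈ A, x * y = y * x) (hfg : A.FG) [Module.Finite A G] :
    IsNoetherianRing G := by
  let : CommRing A := { A.toRing with mul_comm := fun x y => Subtype.ext (hcomm x x.2 y y.2) }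
  have : Algebra.FiniteType K A := (Subalgebra.fg_iff_finiteType A).mp hfg
  have : IsNoetherianRing A := Algebra.FiniteType.isNoetherianRing K A
  have : IsNoetherian A G := isNoetherian_of_isNoetherianRing_of_finite A G
  exact isNoetherian_of_tower A inferInstance

end Noetherian

theorem bifiltered_transfer_noetherian_general
    (E : Type u) [Ring E]
    (F : ℤ → ℤ → AddSubgroup E)
    (hneg : ∀ n m : ℤ, n < 0 ∨ m < 0 → F n m = ⊥)
    (hone : (1 : E) ∈ F 0 0)
    (hmul : ∀ (n m n' m' : ℤ) (a b : E), a ∈ F n m → b ∈ F n' m' →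
      a * b ∈ F (n + n') (m + m'))
    (hexh : ∀ a : E, ∃ n m, a ∈ F n m)
    (G : Type u) [Ring G] [Algebra ℂ G]
    (gr : ∀ n m : ℤ, F n m →+ G)
    (hker : ∀ (n m : ℤ) (a : F n m),
      gr n m a = 0 ↔ (a : E) ∈ F (n - 1) m ⊔ F n (m - 1))
    (hgr_mul : ∀ (n m n' m' : ℤ) (a : F n m) (b : F n' m'),
      gr n m a * gr n' m' b
        = gr (n + n') (m + m') ⟨(a : E) * b, hmul n m n' m' a b a.2 b.2⟩)
    (hgr_one : gr 0 0 ⟨1, hone⟩ = 1)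
    (hinternal : DirectSum.IsInternal fun p : ℤ × ℤ => (gr p.1 p.2).range)
    (A : Subalgebra ℂ G) (hAcomm : ∀ x ∈ A, ∀ y ∈ A, x * y = y * x) (hAfg : A.FG)
    (hleft : ∃ t : Finset G, ∀ g : G,
      g ∈ Submodule.span ℂ {x : G | ∃ a ∈ A, ∃ v ∈ t, x = a * v})
    (hright : ∃ t : Finset G, ∀ g : G,
      g ∈ Submodule.span ℂ {x : G | ∃ a ∈ A, ∃ v ∈ t, x = v * a}) :
    IsNoetherianRing E ∧ IsNoetherianRing Eᵐᵒᵖ := by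
  obtain ⟨t, ht⟩ := hleft
  obtain ⟨t', ht'⟩ := hright
  have := A.moduleFinite_of_forall_mem_span t.finite_toSet ht
  have := A.op.moduleFinite_of_forall_mem_span
    (t'.finite_toSet.preimage MulOpposite.unop_injective.injOn) (A.forall_mem_span_op _ ht')
  have := A.isNoetherianRing_of_moduleFinite hAcomm hAfg
  have : IsNoetherianRing Gᵐᵒᵖ := A.op.isNoetherianRing_of_moduleFinite
    (fun x hx y hy => congrArg MulOpposite.op (hAcomm _ hy _ hx)) hAfg.op
  let 𝓕 : ℤ × ℤ → AddSubgroup E := fun p => F p.1 p.2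
  have : SetLike.GradedMonoid 𝓕 := { one_mem := hone, mul_mem := fun _ _ a b => hmul _ _ _ _ a b }
  have hR := DirectSum.isReesRing_coeRingHom (gr := fun p => gr p.1 p.2)
    (σ := DirectSum.toSemiring (fun p => gr p.1 p.2) hgr_one fun a b => (hgr_mul _ _ _ _ a b).symm)
    (fun p => hneg p.1 p.2) (fun a => let ⟨n, m, h⟩ := hexh a; ⟨(n, m), h⟩)
    (fun p => hker p.1 p.2) (fun _ _ => DirectSum.toSemiring_of _ _ _ _ _) hinternal
  exact ⟨hR.isNoetherianRing, hR.op.isNoetherianRing⟩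

/-- Let `E = ⊕_{n ≥ 0} E_n` be an `ℕ`-graded ring admitting an exhaustive
`ℤ²`-indexed filtration, compatible with multiplication and vanishing in negative degrees,
such that the associated bigraded ring (encoded by a ring `G` with symbol maps
`gr n m : F n m → G` whose kernels are `F (n-1) m ⊔ F n (m-1)`, multiplicative, unital, with
`G` the internal direct sum of the images) contains a commutative `ℂ`-subalgebra `A` of finite
type over which `G` is finitely generated as a left and as a right module.
Then `E` is left and right noetherian. -/
theorem bifiltered_transfer_noetherian
    (E : Type u) [Ring E] [Algebra ℂ E]
    (𝒜 : ℕ → Submodule ℂ E) [GradedRing 𝒜]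
    (F : ℤ → ℤ → AddSubgroup E)
    (hmono₁ : ∀ m, Monotone fun n => F n m) (hmono₂ : ∀ n, Monotone (F n))
    (hneg : ∀ n m : ℤ, n < 0 ∨ m < 0 → F n m = ⊥)
    (hone : (1 : E) ∈ F 0 0)
    (hmul : ∀ (n m n' m' : ℤ) (a b : E), a ∈ F n m → b ∈ F n' m' →
      a * b ∈ F (n + n') (m + m'))
    (hexh : ∀ a : E, ∃ n m, a ∈ F n m)
    (G : Type u) [Ring G] [Algebra ℂ G]
    (gr : ∀ n m : ℤ, F n m →+ G)
    (hker : ∀ (n m : ℤ) (a : F n m),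
      gr n m a = 0 ↔ (a : E) ∈ F (n - 1) m ⊔ F n (m - 1))
    (hgr_mul : ∀ (n m n' m' : ℤ) (a : F n m) (b : F n' m'),
      gr n m a * gr n' m' b
        = gr (n + n') (m + m') ⟨(a : E) * b, hmul n m n' m' a b a.2 b.2⟩)
    (hgr_one : gr 0 0 ⟨1, hone⟩ = 1)
    (hinternal : DirectSum.IsInternal fun p : ℤ × ℤ => (gr p.1 p.2).range)
    (A : Subalgebra ℂ G) (hAcomm : ∀ x ∈ A, ∀ y ∈ A, x * y = y * x) (hAfg : A.FG)
    (hleft : ∃ t : Finset G, ∀ g : G,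
      g ∈ Submodule.span ℂ {x : G | ∃ a ∈ A, ∃ v ∈ t, x = a * v})
    (hright : ∃ t : Finset G, ∀ g : G,
      g ∈ Submodule.span ℂ {x : G | ∃ a ∈ A, ∃ v ∈ t, x = v * a}) :
    IsNoetherianRing E ∧ IsNoetherianRing Eᵐᵒᵖ :=
  bifiltered_transfer_noetherian_general E F hneg hone hmul hexh G gr hker hgr_mul hgr_one hinternal
    A hAcomm hAfg hleft hright
end
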